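/- Through every improper point a lying on a proper plane Π, there are at least λ+2 affine lines contained in Π, where an affine line is a proper line meeting W, and λ = ind(P,W). -/

import Mathlib

/-- A projective space of dimension at least 3, given by its point set `S` and its
set of lines: any two points lie on a unique line, the Veblen (Pasch) axiom holds,
and there exist two disjoint lines (dimension ≥ 3). -/
structure ProjSpace (S : Type*) where
  L : Set (Set S)
  two_points : ∀ k ∈ L, ∃ a ∈ k, ∃ b ∈ k, a ≠ b
  unique_meet : ∀ k ∈ L, ∀ l ∈ L, k ≠ l → (k ∩ l).Subsingleton
  join : ∀ a b : S, a ≠ b → ∃ k ∈ L, a ∈ k ∧ b ∈ k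
  veblen : ∀ l₁ ∈ L, ∀ l₂ ∈ L, ∀ l₃ ∈ L, ∀ l₄ ∈ L, ∀ p a b c d : S,
    l₁ ≠ l₂ → p ≠ a → p ≠ b → p ≠ c → p ≠ d →
    p ∈ l₁ → a ∈ l₁ → c ∈ l₁ → p ∈ l₂ → b ∈ l₂ → d ∈ l₂ →
    a ∈ l₃ → b ∈ l₃ → c ∈ l₄ → d ∈ l₄ → (l₃ ∩ l₄).Nonempty
  dim3 : ∃ k ∈ L, ∃ l ∈ L, k ∩ l = ∅

namespace ProjSpace

variable {S : Type*}

/-- A subspace: any line through two of its points is contained in it. -/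
def IsSubspace (P : ProjSpace S) (X : Set S) : Prop :=
  ∀ k ∈ P.L, ∀ a ∈ k, ∀ b ∈ k, a ≠ b → a ∈ X → b ∈ X → k ⊆ X

/-- The subspace spanned by a point set. -/
def span (P : ProjSpace S) (X : Set S) : Set S :=
  ⋂₀ {Y | P.IsSubspace Y ∧ X ⊆ Y}

/-- A plane: the span of a line together with a point outside it. -/
def IsPlane (P : ProjSpace S) (Pl : Set S) : Prop :=
  ∃ k ∈ P.L, ∃ a, a ∉ k ∧ Pl = P.span (insert a k)

/-- `HasIndex P W lam`: some line has exactly `lam` points in `W` and every line not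
contained in `W` has at most `lam` points in `W`. -/
def HasIndex (P : ProjSpace S) (W : Set S) (lam : ℕ) : Prop :=
  (∃ k ∈ P.L, (k ∩ W).encard = (lam : ℕ∞)) ∧
    ∀ k ∈ P.L, ¬ k ⊆ W → (k ∩ W).encard ≤ (lam : ℕ∞)

/-- Three lines form a triangle: pairwise distinct, pairwise intersecting,
not concurrent. -/
def LineTriangle (P : ProjSpace S) (k₁ k₂ k₃ : Set S) : Prop :=
  k₁ ∈ P.L ∧ k₂ ∈ P.L ∧ k₃ ∈ P.L ∧ k₁ ≠ k₂ ∧ k₁ ≠ k₃ ∧ k₂ ≠ k₃ ∧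
    (k₁ ∩ k₂).Nonempty ∧ (k₁ ∩ k₃).Nonempty ∧ (k₂ ∩ k₃).Nonempty ∧
    ¬ (k₁ ∩ k₂ ∩ k₃).Nonempty

/-- Parallelism w.r.t. the horizon `W`: the lines meet, and only inside `W`. -/
def Par (W : Set S) (k₁ k₂ : Set S) : Prop :=
  (k₁ ∩ k₂).Nonempty ∧ k₁ ∩ k₂ ⊆ W

end ProjSpace

/-! Pick a point `b ∈ Π \ W` and a line `m ⊆ Π` through `b` missing `a`. Being proper, `m` has
at most `λ` points in `W`, hence at least `λ + 2` points outside `W`. Joining `a` to these points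
gives distinct lines of `Π`; each contains `a ∈ W` and a point outside `W`, so each is affine. -/

theorem Set.le_encard_diff_of_encard_inter_le {α : Type*} {s t : Set α} {n : ℕ} {k : ℕ∞}
    (hinter : (s ∩ t).encard ≤ n) (hs : n + k ≤ s.encard) : k ≤ (s \ t).encard := by
  have h : k + n ≤ (s \ t).encard + n :=
    calc k + n = n + k := add_comm _ _
      _ ≤ s.encard := hs
      _ = (s \ t).encard + (s ∩ t).encard := (Set.encard_sdiff_add_encard_inter s t).symm
      _ ≤ (s \ t).encard + n := add_le_add_right hinter _
  exact (WithTop.add_le_add_iff_right (ENat.natCast_ne_top n)).mp h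

namespace ProjSpace

variable {S : Type*} {P : ProjSpace S}

theorem eq_of_mem_of_mem {l l' : Set S} (hl : l ∈ P.L) (hl' : l' ∈ P.L) {x y : S} (hxy : x ≠ y)
    (hx : x ∈ l) (hy : y ∈ l) (hx' : x ∈ l') (hy' : y ∈ l') : l = l' := by
  by_contra h
  exact hxy (P.unique_meet l hl l' hl' h ⟨hx, hx'⟩ ⟨hy, hy'⟩)

theorem isSubspace_span (X : Set S) : P.IsSubspace (P.span X) :=
  fun k hk a hak b hbk hab haX hbX _ hx Y hY => hY.1 k hk a hak b hbk hab (haX Y hY) (hbX Y hY) hx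

theorem subset_span (X : Set S) : X ⊆ P.span X :=
  fun _ hx _ hY => hY.2 hx

theorem IsSubspace.line_subset {X : Set S} (hX : P.IsSubspace X) {a b : S} (hab : a ≠ b)
    (ha : a ∈ X) (hb : b ∈ X) : ∃ k ∈ P.L, a ∈ k ∧ b ∈ k ∧ k ⊆ X := by
  obtain ⟨k, hk, hak, hbk⟩ := P.join a b hab
  exact ⟨k, hk, hak, hbk, hX k hk a hak b hbk hab ha hb⟩

theorem IsPlane.isSubspace {Pl : Set S} (hPl : P.IsPlane Pl) : P.IsSubspace Pl := by
  obtain ⟨k, -, p, -, rfl⟩ := hPl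
  exact isSubspace_span _

theorem IsPlane.exists_mem_not_mem {Pl : Set S} (hPl : P.IsPlane Pl) {l : Set S} (hl : l ∈ P.L) :
    ∃ q ∈ Pl, q ∉ l := by
  obtain ⟨k, hk, p, hpk, rfl⟩ := hPl
  by_cases hkl : k ⊆ l
  · obtain ⟨x, hxk, y, hyk, hxy⟩ := P.two_points k hk
    have hkeq : k = l := eq_of_mem_of_mem hk hl hxy hxk hyk (hkl hxk) (hkl hyk)
    exact ⟨p, subset_span _ (Set.mem_insert p k), hkeq ▸ hpk⟩
  · obtain ⟨q, hqk, hql⟩ := Set.not_subset.mp hkl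
    exact ⟨q, subset_span _ (Set.mem_insert_of_mem p hqk), hql⟩

theorem IsPlane.exists_line_mem_not_mem {Pl : Set S} (hPl : P.IsPlane Pl) {a b : S} (hab : a ≠ b)
    (ha : a ∈ Pl) (hb : b ∈ Pl) : ∃ m ∈ P.L, m ⊆ Pl ∧ b ∈ m ∧ a ∉ m := by
  obtain ⟨k, hk, hak, hbk, -⟩ := hPl.isSubspace.line_subset hab ha hb
  obtain ⟨q, hqPl, hqk⟩ := hPl.exists_mem_not_mem hk
  have hbq : b ≠ q := fun h => hqk (h ▸ hbk)
  obtain ⟨m, hm, hbm, hqm, hmPl⟩ := hPl.isSubspace.line_subset hbq hb hqPl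
  refine ⟨m, hm, hmPl, hbm, fun ham => hqk ?_⟩
  exact eq_of_mem_of_mem hm hk hab ham hbm hak hbk ▸ hqm

/-- Central projection from `a` onto a line `m` not through `a` is injective. -/
theorem encard_le_encard_lines_through {m T : Set S} {a : S} (hm : m ∈ P.L) (ham : a ∉ m)
    (hTm : T ⊆ m) : T.encard ≤ {l | l ∈ P.L ∧ a ∈ l ∧ (l ∩ T).Nonempty}.encard := by
  have hjoin : ∀ x ∈ T, ∃ l ∈ P.L, a ∈ l ∧ x ∈ l := fun x hx =>
    P.join a x fun h => ham (h ▸ hTm hx)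
  choose! f hfL haf hxf using hjoin
  refine Set.encard_le_encard_of_injOn (f := f)
    (fun x hx => ⟨hfL x hx, haf x hx, x, hxf x hx, hx⟩) fun x hx y hy hxy => ?_
  have hfm : f x ≠ m := fun h => ham (h ▸ haf x hx)
  exact P.unique_meet (f x) (hfL x hx) m hm hfm ⟨hxf x hx, hTm hx⟩ ⟨hxy ▸ hxf y hy, hTm hy⟩

end ProjSpace

open ProjSpace in
theorem many_affine_lines_through_improper_point_general {S : Type*} (P : ProjSpace S)
    (W : Set S) (lam : ℕ) (hind : P.HasIndex W lam)
    (hsize : ∀ k ∈ P.L, 2 * (lam : ℕ∞) + 2 ≤ k.encard)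
    (a : S) (ha : a ∈ W) (Pl : Set S) (hPl : P.IsPlane Pl) (hPlprop : ¬ Pl ⊆ W)
    (haPl : a ∈ Pl) :
    (lam : ℕ∞) + 2 ≤
      {l : Set S | l ∈ P.L ∧ ¬ l ⊆ W ∧ (l ∩ W).Nonempty ∧ a ∈ l ∧ l ⊆ Pl}.encard := by
  obtain ⟨b, hbPl, hbW⟩ := Set.not_subset.mp hPlprop
  have hab : a ≠ b := fun h => hbW (h ▸ ha)
  obtain ⟨m, hm, hmPl, hbm, ham⟩ := hPl.exists_line_mem_not_mem hab haPl hbPl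
  have hmW : (lam : ℕ∞) + 2 ≤ (m \ W).encard := by
    refine Set.le_encard_diff_of_encard_inter_le (hind.2 m hm fun h => hbW (h hbm)) ?_
    calc (lam : ℕ∞) + (lam + 2) = 2 * lam + 2 := by ring
      _ ≤ m.encard := hsize m hm
  refine hmW.trans ((encard_le_encard_lines_through hm ham Set.sdiff_subset).trans
    (Set.encard_le_encard ?_))
  rintro l ⟨hl, hal, x, hxl, hxm, hxW⟩
  have hax : a ≠ x := fun h => hxW (h ▸ ha)
  exact ⟨hl, fun h => hxW (h hxl), ⟨a, hal, ha⟩, hal,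
    hPl.isSubspace l hl a hal x hxl hax haPl (hmPl hxm)⟩

open ProjSpace in
/-- through every improper point on a proper plane there are at least
`lam + 2` affine lines (proper lines meeting `W`) contained in that plane. -/
theorem many_affine_lines_through_improper_point {S : Type*} (P : ProjSpace S)
    (W : Set S) (lam : ℕ) (hlam : 0 < lam) (hind : P.HasIndex W lam)
    (hsize : ∀ k ∈ P.L, 2 * (lam : ℕ∞) + 2 ≤ k.encard)
    (a : S) (ha : a ∈ W) (Pl : Set S) (hPl : P.IsPlane Pl) (hPlprop : ¬ Pl ⊆ W)
    (haPl : a ∈ Pl) :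
    (lam : ℕ∞) + 2 ≤
      {l : Set S | l ∈ P.L ∧ ¬ l ⊆ W ∧ (l ∩ W).Nonempty ∧ a ∈ l ∧ l ⊆ Pl}.encard :=
  many_affine_lines_through_improper_point_general P W lam hind hsize a ha Pl hPl hPlprop haPl
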